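/- arXiv:1607.08066 — 5 statements merged into one kernel-verified Lean document; each statement's English description precedes it below -/
import Mathlib

section
/- Let $X_1,\dots,X_n$ be independent identically distributed real-valued random variables with distribution function $F$ and order statistics $X_{1:n}\le\dots\le X_{n:n}$, let $k,\delta>0$ with $\rho=k/\delta$ an integer, $\rho>1$, $n\ge 2\rho+1$, and $\mathbf{E}|X_1|^{\delta}<\infty$. Then $\mathbf{E}|X_{\rho:n}|^k \le B(\rho,\,n-\rho+1)^{-1}\,(\mathbf{E}|X_1|^{\delta})^{\rho}$. -/
open MeasureTheory ProbabilityTheory Finset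
open scoped ENNReal

/-!
If `Y` is the increasing rearrangement of `X` and `2r - 1 ≤ n`, then at least `r` of the `X i`
satisfy `|Y_{r-1}| ≤ |X i|`: the top `r` values above `Y_{r-1}` when it is nonnegative, the bottom
`r` values otherwise. Hence `|Y_{r-1}|^k = (|Y_{r-1}|^δ)^r` is dominated by the sum of
`∏_{i ∈ T} |X i|^δ` over all `r`-subsets `T`, whose expectation is `C(n, r) (E|X_1|^δ)^r` by
independence. Finally `C(n, r) ≤ r C(n, r) = B(r, n - r + 1)⁻¹`.
-/

lemma Monotone.exists_card_eq_abs_le {n : ℕ} {y : Fin n → ℝ} (hy : Monotone y) (j : Fin n)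
    (hj : 2 * (j : ℕ) + 1 ≤ n) : ∃ S : Finset (Fin n), #S = j + 1 ∧ ∀ i ∈ S, |y j| ≤ |y i| := by
  by_cases hyj : 0 ≤ y j
  · obtain ⟨S, hSj, hS⟩ := exists_subset_card_eq (s := Ici j) (n := j + 1)
      (by rw [Fin.card_Ici]; omega)
    refine ⟨S, hS, fun i hi => ?_⟩
    rw [abs_of_nonneg hyj]
    exact (hy (mem_Ici.mp (hSj hi))).trans (le_abs_self _)
  · refine ⟨Iic j, Fin.card_Iic j, fun i hi => ?_⟩
    rw [abs_of_neg (not_le.mp hyj)]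
    exact (neg_le_neg (hy (mem_Iic.mp hi))).trans (neg_le_abs _)

lemma exists_card_eq_abs_le_of_monotone_of_perm {n : ℕ} {x y : Fin n → ℝ} (hy : Monotone y)
    (σ : Equiv.Perm (Fin n)) (hσ : ∀ j, y j = x (σ j)) (j : Fin n) (hj : 2 * (j : ℕ) + 1 ≤ n) :
    ∃ S : Finset (Fin n), #S = j + 1 ∧ ∀ i ∈ S, |y j| ≤ |x i| := by
  obtain ⟨S, hS, hle⟩ := hy.exists_card_eq_abs_le j hj
  refine ⟨S.map σ.toEmbedding, by rw [card_map, hS], fun i hi => ?_⟩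
  obtain ⟨i', hi', rfl⟩ := mem_map.mp hi
  simpa [hσ] using hle i' hi'

lemma pow_card_le_sum_powersetCard_prod {ι : Type*} [Fintype ι] {a : ℝ≥0∞} {f : ι → ℝ≥0∞}
    {S : Finset ι} (hS : ∀ i ∈ S, a ≤ f i) :
    a ^ #S ≤ ∑ T ∈ powersetCard #S univ, ∏ i ∈ T, f i :=
  calc a ^ #S = ∏ _i ∈ S, a := (prod_const a).symm
    _ ≤ ∏ i ∈ S, f i := prod_le_prod' hS
    _ ≤ ∑ T ∈ powersetCard #S univ, ∏ i ∈ T, f i :=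
      single_le_sum (f := fun T => ∏ i ∈ T, f i) (fun _ _ => bot_le)
        (mem_powersetCard.mpr ⟨subset_univ S, rfl⟩)

lemma ofReal_abs_rpow_le_sum_powersetCard_prod_of_perm {n r : ℕ} {x y : Fin n → ℝ}
    (hy : Monotone y) (σ : Equiv.Perm (Fin n)) (hσ : ∀ j, y j = x (σ j)) (hr : r ≠ 0)
    (hrn : 2 * r ≤ n + 1) {δ : ℝ} (hδ : 0 ≤ δ) :
    ENNReal.ofReal (|y ⟨r - 1, by omega⟩| ^ (δ * r)) ≤
      ∑ T ∈ powersetCard r univ, ∏ i ∈ T, ENNReal.ofReal (|x i| ^ δ) := by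
  obtain ⟨S, hS, hle⟩ :=
    exists_card_eq_abs_le_of_monotone_of_perm hy σ hσ ⟨r - 1, by omega⟩ (by simp only; omega)
  rw [Nat.sub_add_cancel (Nat.one_le_iff_ne_zero.mpr hr)] at hS
  rw [Real.rpow_mul (abs_nonneg _), Real.rpow_natCast, ENNReal.ofReal_pow (by positivity)]
  have := pow_card_le_sum_powersetCard_prod fun i hi =>
    ENNReal.ofReal_le_ofReal (Real.rpow_le_rpow (abs_nonneg _) (hle i hi) hδ)
  rwa [hS] at this

lemma lintegral_sum_powersetCard_prod_of_iIndepFun {Ω ι : Type*} [MeasurableSpace Ω]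
    {μ : Measure Ω} [Fintype ι] {g : ι → Ω → ℝ≥0∞} (hindep : iIndepFun g μ)
    (hmeas : ∀ i, Measurable (g i)) {c : ℝ≥0∞} (hc : ∀ i, ∫⁻ ω, g i ω ∂μ = c) (r : ℕ) :
    ∫⁻ ω, ∑ T ∈ powersetCard r univ, ∏ i ∈ T, g i ω ∂μ = (Fintype.card ι).choose r * c ^ r := by
  rw [lintegral_finsetSum _ fun T _ => T.measurable_prod fun i _ => hmeas i]
  calc ∑ T ∈ powersetCard r univ, ∫⁻ ω, ∏ i ∈ T, g i ω ∂μ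
      = ∑ _T ∈ powersetCard r (univ : Finset ι), c ^ r := by
        refine sum_congr rfl fun T hT => ?_
        rw [lintegral_prod_eq_prod_lintegral_of_indepFun T g hindep hmeas]
        simp only [hc, prod_const, (mem_powersetCard.mp hT).2]
    _ = (Fintype.card ι).choose r * c ^ r := by
        rw [sum_const, card_powersetCard, card_univ, nsmul_eq_mul]

lemma Real.Gamma_mul_Gamma_div_Gamma_natCast {r n : ℕ} (hr : r ≠ 0) (hrn : r ≤ n) :
    Real.Gamma r * Real.Gamma (n - r + 1) / Real.Gamma (r + (n - r + 1)) =
      ((r * n.choose r : ℕ) : ℝ)⁻¹ := by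
  have hfac : r * n.choose r * ((r - 1).factorial * (n - r).factorial) = n.factorial := by
    rw [← Nat.choose_mul_factorial_mul_factorial hrn, ← Nat.mul_factorial_pred hr]
    ring
  obtain ⟨s, rfl⟩ := Nat.exists_eq_add_one_of_ne_zero hr
  obtain ⟨t, rfl⟩ := Nat.exists_eq_add_of_le hrn
  simp only [add_tsub_cancel_right, add_tsub_cancel_left] at hfac
  have h₁ : ((s + 1 : ℕ) : ℝ) = s + 1 := by push_cast; ring
  have h₂ : ((s + 1 + t : ℕ) : ℝ) - (s + 1 : ℕ) + 1 = t + 1 := by push_cast; ring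
  have h₃ : ((s + 1 : ℕ) : ℝ) + (t + 1) = (s + 1 + t : ℕ) + 1 := by push_cast; ring
  rw [h₂, h₃, h₁, Real.Gamma_nat_eq_factorial, Real.Gamma_nat_eq_factorial,
    Real.Gamma_nat_eq_factorial, ← hfac]
  push_cast
  field_simp

/-- Bound for the `ρ`-th order statistic when `ρ = k/δ` is an integer greater than 1: for
i.i.d. real random variables `X 0, …, X (n-1)` with order statistics `Y`, `n ≥ 2ρ+1`, and
`E|X_1|^δ < ∞`: `E|X_{ρ:n}|^k ≤ B(ρ, n-ρ+1)⁻¹ (E|X_1|^δ)^ρ`, where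
`B(a,b) = Γ(a)Γ(b)/Γ(a+b)`. -/
theorem stmt_9 {Ω : Type*} [MeasurableSpace Ω] (μ : Measure Ω) [IsProbabilityMeasure μ]
    (r : ℕ) (hr : 1 < r) (n : ℕ) (hn : 2 * r + 1 ≤ n) (X Y : Fin n → Ω → ℝ)
    (hmeas : ∀ j, Measurable (X j))
    (hindep : iIndepFun X μ)
    (hident : ∀ j, μ.map (X j) = μ.map (X ⟨0, by omega⟩))
    (hsort : ∀ ω, Monotone fun j => Y j ω)
    (hperm : ∀ ω, ∃ σ : Equiv.Perm (Fin n), ∀ j, Y j ω = X (σ j) ω)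
    (k δ : ℝ) (hδ : 0 < δ) (hρ : k / δ = (r : ℝ))
    (hmom : Integrable (fun ω => |X ⟨0, by omega⟩ ω| ^ δ) μ)
    (B : ℝ → ℝ → ℝ)
    (hB : ∀ a b, B a b = Real.Gamma a * Real.Gamma b / Real.Gamma (a + b)) :
    ∫⁻ ω, ENNReal.ofReal (|Y ⟨r - 1, by omega⟩ ω| ^ k) ∂μ ≤
      ENNReal.ofReal ((B (k / δ) ((n : ℝ) - k / δ + 1))⁻¹ *
        (∫ ω, |X ⟨0, by omega⟩ ω| ^ δ ∂μ) ^ (k / δ)) := by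
  have hkr : k = δ * r := by rw [div_eq_iff hδ.ne'] at hρ; linarith
  subst hkr
  set φ : ℝ → ℝ≥0∞ := fun x => ENNReal.ofReal (|x| ^ δ)
  have hφ : Measurable φ :=
    ((Real.continuous_rpow_const hδ.le).measurable.comp measurable_abs).ennreal_ofReal
  set m := ∫ ω, |X ⟨0, by omega⟩ ω| ^ δ ∂μ
  have hm : ∀ i, ∫⁻ ω, φ (X i ω) ∂μ = ENNReal.ofReal m := fun i =>
    (IdentDistrib.comp ⟨(hmeas i).aemeasurable, (hmeas _).aemeasurable, hident i⟩ hφ).lintegral_eq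
      |>.trans (ofReal_integral_eq_lintegral_ofReal hmom (ae_of_all _ fun _ => by positivity)).symm
  calc ∫⁻ ω, ENNReal.ofReal (|Y ⟨r - 1, by omega⟩ ω| ^ (δ * r)) ∂μ
      ≤ ∫⁻ ω, ∑ T ∈ powersetCard r univ, ∏ i ∈ T, φ (X i ω) ∂μ := lintegral_mono fun ω =>
        have ⟨σ, hσ⟩ := hperm ω
        ofReal_abs_rpow_le_sum_powersetCard_prod_of_perm (x := fun i => X i ω) (hsort ω) σ hσ
          (by omega) (by omega) hδ.le
    _ = n.choose r * ENNReal.ofReal m ^ r := by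
      simpa only [Fintype.card_fin] using lintegral_sum_powersetCard_prod_of_iIndepFun
        (g := fun i ω => φ (X i ω)) (hindep.comp (fun _ => φ) fun _ => hφ)
        (fun i => hφ.comp (hmeas i)) hm r
    _ ≤ ENNReal.ofReal ((r * n.choose r : ℕ) * m ^ r) := by
      rw [ENNReal.ofReal_mul (by positivity), ENNReal.ofReal_natCast,
        ENNReal.ofReal_pow (integral_nonneg fun _ => by positivity)]
      gcongr
      exact_mod_cast Nat.le_mul_of_pos_left _ (by omega)
    _ = _ := by
      rw [hρ, hB, Real.Gamma_mul_Gamma_div_Gamma_natCast (by omega) (by omega), inv_inv,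
        Real.rpow_natCast]
end

section
/- For every real $\rho$ with $0<\rho<1$ and every integer $n\ge 2\rho+1$, one has $\Gamma(n+1)/\Gamma(n-\rho+1) < e^{1/12}\,n^{\rho}\,\sqrt{1+\rho}$, and consequently with $i=2$, $\Gamma(n+1)/(\Gamma(i)\,\Gamma(n-\rho+1)) < e^{1/12+\rho/2+1}\,(n/i)^{\rho}$. -/
/-!
Log-convexity of `Γ` between `x` and `x + 1` gives Wendel's inequality `Γ(x + ρ) ≤ x^ρ Γ(x)`;
with `x = n - ρ + 1` this bounds the ratio by `(n + 1 - ρ)^ρ < n^ρ exp(ρ(1 - ρ)/n)`, and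
`ρ(1 - ρ) ≤ log(1 + ρ)` together with `n ≥ 2` turns the exponential into `√(1 + ρ)`, so the
factor `e^(1/12)` is not even needed.
The second bound follows from the hratio since `Γ 2 = 1`, `√(1 + ρ) ≤ exp(ρ/2)` and `2^ρ ≤ 2 < e`.
-/

open Real

namespace Real

theorem Gamma_add_le_rpow_mul_Gamma {x s : ℝ} (hx : 0 < x) (hs0 : 0 ≤ s) (hs1 : s ≤ 1) :
    Gamma (x + s) ≤ x ^ s * Gamma x := by
  rcases hs0.eq_or_lt with rfl | hs0
  · simp
  rcases hs1.eq_or_lt with rfl | hs1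
  · simp [Gamma_add_one hx.ne']
  have hΓ := Gamma_pos_of_pos hx
  calc Gamma (x + s) = Gamma ((1 - s) * x + s * (x + 1)) := by ring_nf
    _ ≤ Gamma x ^ (1 - s) * Gamma (x + 1) ^ s :=
      Gamma_mul_add_mul_le_rpow_Gamma_mul_rpow_Gamma hx (by linarith) (by linarith) hs0
        (by ring)
    _ = x ^ s * Gamma x := by
      rw [Gamma_add_one hx.ne', mul_rpow hx.le hΓ.le, mul_left_comm, ← rpow_add hΓ]
      norm_num

theorem add_rpow_lt_rpow_mul_exp {x c s : ℝ} (hx : 0 < x) (hxc : 0 ≤ x + c) (hc : c ≠ 0)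
    (hs : 0 < s) : (x + c) ^ s < x ^ s * exp (s * c / x) := by
  have hlt : x + c < x * exp (c / x) := by
    have := mul_lt_mul_of_pos_left (add_one_lt_exp (div_ne_zero hc hx.ne')) hx
    rwa [mul_add, mul_div_cancel₀ _ hx.ne', mul_one, add_comm c] at this
  calc (x + c) ^ s < (x * exp (c / x)) ^ s := rpow_lt_rpow hxc hlt hs
    _ = x ^ s * exp (s * c / x) := by
      rw [mul_rpow hx.le (exp_pos _).le, ← exp_mul]
      ring_nf

theorem mul_one_sub_le_log_one_add {ρ : ℝ} (hρ : 0 ≤ ρ) : ρ * (1 - ρ) ≤ log (1 + ρ) := by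
  have h1ρ : 0 < 1 + ρ := by linarith
  calc ρ * (1 - ρ) ≤ ρ / (1 + ρ) := by
        rw [le_div_iff₀ h1ρ]
        nlinarith [pow_nonneg hρ 3]
    _ = 1 - (1 + ρ)⁻¹ := by field_simp; ring
    _ ≤ log (1 + ρ) := one_sub_inv_le_log_of_pos h1ρ

theorem exp_mul_one_sub_div_two_le_sqrt_one_add {ρ : ℝ} (hρ : 0 ≤ ρ) :
    exp (ρ * (1 - ρ) / 2) ≤ √(1 + ρ) :=
  calc exp (ρ * (1 - ρ) / 2) ≤ exp (log (1 + ρ) / 2) := by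
        gcongr
        exact mul_one_sub_le_log_one_add hρ
    _ = √(1 + ρ) := by rw [exp_half, exp_log (by linarith)]

theorem Gamma_add_one_div_Gamma_sub_add_one_lt {x ρ : ℝ} (hx : 2 ≤ x) (h0 : 0 < ρ)
    (h1 : ρ < 1) : Gamma (x + 1) / Gamma (x - ρ + 1) < x ^ ρ * √(1 + ρ) := by
  have hΓ := Gamma_pos_of_pos (by linarith : 0 < x - ρ + 1)
  rw [div_lt_iff₀ hΓ]
  calc Gamma (x + 1) = Gamma ((x - ρ + 1) + ρ) := by ring_nf
    _ ≤ (x + (1 - ρ)) ^ ρ * Gamma (x - ρ + 1) := by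
      rw [show x + (1 - ρ) = x - ρ + 1 by ring]
      exact Gamma_add_le_rpow_mul_Gamma (by linarith) h0.le h1.le
    _ < x ^ ρ * exp (ρ * (1 - ρ) / x) * Gamma (x - ρ + 1) := by
      gcongr
      exact add_rpow_lt_rpow_mul_exp (by linarith) (by linarith) (sub_pos.2 h1).ne' h0
    _ ≤ x ^ ρ * √(1 + ρ) * Gamma (x - ρ + 1) := by
      gcongr
      refine le_trans (exp_le_exp.2 ?_) (exp_mul_one_sub_div_two_le_sqrt_one_add h0.le)
      exact div_le_div_of_nonneg_left (by nlinarith) two_pos hx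

theorem sqrt_one_add_mul_two_rpow_le_exp {ρ : ℝ} (h1 : ρ ≤ 1) :
    √(1 + ρ) * 2 ^ ρ ≤ exp (ρ / 2 + 1) := by
  have hsqrt : √(1 + ρ) ≤ exp (ρ / 2) := by
    rw [exp_half]
    exact sqrt_le_sqrt (by linarith [add_one_le_exp ρ])
  have h2ρ : (2 : ℝ) ^ ρ ≤ exp 1 := calc
    (2 : ℝ) ^ ρ ≤ 2 ^ (1 : ℝ) := rpow_le_rpow_of_exponent_le one_le_two h1
    _ ≤ exp 1 := by linarith [rpow_one (2 : ℝ), add_one_le_exp 1]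
  rw [exp_add]
  gcongr

end Real

/-- For every real `ρ` with `0 < ρ < 1` and every integer `n ≥ 2ρ+1`:
`Γ(n+1)/Γ(n-ρ+1) < e^(1/12) n^ρ √(1+ρ)`, and consequently, with `i = 2`,
`Γ(n+1)/(Γ(i) Γ(n-ρ+1)) < e^(1/12+ρ/2+1) (n/i)^ρ`. -/
theorem stmt_12 (ρ : ℝ) (h0 : 0 < ρ) (h1 : ρ < 1) (n : ℕ) (hn : 2 * ρ + 1 ≤ (n : ℝ)) :
    Real.Gamma ((n : ℝ) + 1) / Real.Gamma ((n : ℝ) - ρ + 1) <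
        Real.exp (1/12) * (n : ℝ) ^ ρ * Real.sqrt (1 + ρ) ∧
    Real.Gamma ((n : ℝ) + 1) / (Real.Gamma 2 * Real.Gamma ((n : ℝ) - ρ + 1)) <
        Real.exp (1/12 + ρ/2 + 1) * ((n : ℝ) / 2) ^ ρ := by
  have hn2 : (2 : ℝ) ≤ n := by
    have : 1 < n := by exact_mod_cast (by linarith : (1 : ℝ) < n)
    exact_mod_cast this
  have hratio : Gamma (n + 1) / Gamma (n - ρ + 1) < exp (1/12) * n ^ ρ * √(1 + ρ) := by
    refine (Gamma_add_one_div_Gamma_sub_add_one_lt hn2 h0 h1).trans ?_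
    rw [mul_assoc]
    exact lt_mul_of_one_lt_left (by positivity) (one_lt_exp_iff.2 (by norm_num))
  rw [Gamma_two, one_mul]
  refine ⟨hratio, hratio.trans_le ?_⟩
  calc exp (1/12) * n ^ ρ * √(1 + ρ)
      = exp (1/12) * (n ^ ρ / 2 ^ ρ) * (√(1 + ρ) * 2 ^ ρ) := by field_simp
    _ ≤ exp (1/12) * (n ^ ρ / 2 ^ ρ) * exp (ρ / 2 + 1) := by
      gcongr
      exact sqrt_one_add_mul_two_rpow_le_exp h1.le
    _ = exp (1/12 + ρ/2 + 1) * (n / 2) ^ ρ := by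
      rw [div_rpow (by positivity) zero_le_two, add_assoc (1/12), exp_add (1/12)]
      ring
end

section
/- For every non-integer real $\rho\ge 1$, every integer $n\ge 2\rho+1$, and $i=\lfloor\rho\rfloor+2$, one has $\Gamma(n+1)/(\Gamma(i)\,\Gamma(n-\rho+1)) < e^{\rho+1}\,(n/i)^{\rho}$. -/
/-!
Write `k = ⌊ρ⌋` and `x = n - ρ + 1`. Log-convexity of `Γ` gives Wendel's inequality
`Γ(x + s) ≤ x ^ s Γ(x)` for `s ∈ [0, 1]`; combined with `Γ(y + 1) = y Γ(y)` it yields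
`Γ(n + 1) ≤ n ^ ρ Γ(x)`. It remains to show `(k + 2) ^ ρ < e ^ (ρ + 1) (k + 1)!`: since `ρ < k + 1`,
this follows from `(m + 1) ^ m ≤ e ^ m m!`, proved by induction using `(1 + 1/m) ^ m ≤ e`.
-/

open Real

namespace Real

theorem Gamma_add_nat_add_one_le {x s : ℝ} (hx : 0 < x) (hs0 : 0 ≤ s) (hs1 : s ≤ 1) (m : ℕ) :
    Gamma (x + s + m + 1) ≤ (x + s + m) ^ (s + m + 1) * Gamma x := by
  induction m with
  | zero =>
    have hxs : 0 < x + s := by linarith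
    simp only [Nat.cast_zero, add_zero]
    calc Gamma (x + s + 1) = (x + s) * Gamma (x + s) := Gamma_add_one hxs.ne'
      _ ≤ (x + s) * (x ^ s * Gamma x) := by gcongr; exact Gamma_add_le_rpow_mul_Gamma hx hs0 hs1
      _ ≤ (x + s) * ((x + s) ^ s * Gamma x) := by gcongr; linarith
      _ = (x + s) ^ (s + 1) * Gamma x := by rw [rpow_add_one hxs.ne']; ring
  | succ m ih =>
    have hy : 0 < x + s + m + 1 := by positivity
    rw [Nat.cast_succ, show x + s + (m + 1) = x + s + m + 1 by ring,
      show s + (m + 1) + 1 = s + m + 1 + 1 by ring, Gamma_add_one hy.ne', rpow_add_one hy.ne']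
    calc (x + s + m + 1) * Gamma (x + s + m + 1)
        ≤ (x + s + m + 1) * ((x + s + m) ^ (s + m + 1) * Gamma x) := by gcongr
      _ ≤ (x + s + m + 1) * ((x + s + m + 1) ^ (s + m + 1) * Gamma x) := by
          gcongr _ * (?_ ^ _ * _)
          linarith
      _ = (x + s + m + 1) ^ (s + m + 1) * (x + s + m + 1) * Gamma x := by ring

theorem Gamma_add_le_rpow_mul_Gamma_of_one_le {x ρ : ℝ} (hx : 0 < x) (hρ : 1 ≤ ρ) :
    Gamma (x + ρ) ≤ (x + ρ - 1) ^ ρ * Gamma x := by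
  set m := ⌊ρ - 1⌋₊
  have hm : (m : ℝ) ≤ ρ - 1 := Nat.floor_le (by linarith)
  have hm' : ρ - 1 < m + 1 := Nat.lt_floor_add_one _
  have h := Gamma_add_nat_add_one_le hx (s := ρ - 1 - m) (by linarith) (by linarith) m
  rwa [show x + (ρ - 1 - m) + m + 1 = x + ρ by ring, show x + (ρ - 1 - m) + m = x + ρ - 1 by ring,
    show ρ - 1 - m + m + 1 = ρ by ring] at h

theorem add_one_pow_le_exp_mul_factorial (m : ℕ) : ((m : ℝ) + 1) ^ m ≤ exp m * m.factorial := by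
  induction m with
  | zero => simp
  | succ m ih =>
    have hexp : (1 + ((m : ℝ) + 1)⁻¹) ^ (m + 1) ≤ exp 1 := by
      simpa using one_add_inv_pow_le_exp (n := m + 1)
    push_cast
    calc ((m : ℝ) + 1 + 1) ^ (m + 1)
        = ((m : ℝ) + 1) * ((m : ℝ) + 1) ^ m * (1 + ((m : ℝ) + 1)⁻¹) ^ (m + 1) := by
          rw [← pow_succ', ← mul_pow]
          congr 1
          field_simp
      _ ≤ ((m : ℝ) + 1) * (exp m * m.factorial) * exp 1 := by gcongr
      _ = exp (m + 1) * ((m + 1).factorial : ℕ) := by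
          rw [Nat.factorial_succ, exp_add]; push_cast; ring

theorem floor_add_two_rpow_lt_exp_mul_Gamma {ρ : ℝ} (hρ : 0 ≤ ρ) :
    ((⌊ρ⌋₊ : ℝ) + 2) ^ ρ < exp (ρ + 1) * Gamma ((⌊ρ⌋₊ : ℝ) + 2) := by
  set k := ⌊ρ⌋₊
  have hk : (k : ℝ) ≤ ρ := Nat.floor_le hρ
  have hk' : ρ < k + 1 := Nat.lt_floor_add_one ρ
  calc ((k : ℝ) + 2) ^ ρ < ((k : ℝ) + 2) ^ ((k : ℝ) + 1) :=
        rpow_lt_rpow_of_exponent_lt (by linarith) hk'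
    _ = ((k : ℝ) + 1 + 1) ^ (k + 1) := by rw [← rpow_natCast]; push_cast; ring_nf
    _ ≤ exp ((k : ℝ) + 1) * (k + 1).factorial := by
        exact_mod_cast add_one_pow_le_exp_mul_factorial (k + 1)
    _ ≤ exp (ρ + 1) * Gamma ((k : ℝ) + 2) := by
        rw [show (k : ℝ) + 2 = ((k + 1 : ℕ) : ℝ) + 1 by push_cast; ring, Gamma_nat_eq_factorial]
        gcongr

end Real

theorem stmt_13_general (ρ : ℝ) (h1 : 1 ≤ ρ)
    (n : ℕ) (hn : 2 * ρ + 1 ≤ (n : ℝ)) :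
    Real.Gamma ((n : ℝ) + 1) /
        (Real.Gamma ((⌊ρ⌋₊ : ℝ) + 2) * Real.Gamma ((n : ℝ) - ρ + 1)) <
      Real.exp (ρ + 1) * ((n : ℝ) / ((⌊ρ⌋₊ : ℝ) + 2)) ^ ρ := by
  have hx : 0 < (n : ℝ) - ρ + 1 := by linarith
  have hn0 : (0 : ℝ) < n := by linarith
  have hnum : Gamma ((n : ℝ) + 1) ≤ (n : ℝ) ^ ρ * Gamma ((n : ℝ) - ρ + 1) := by
    have := Gamma_add_le_rpow_mul_Gamma_of_one_le hx h1
    rwa [show (n : ℝ) - ρ + 1 + ρ = n + 1 by ring, add_sub_cancel_right] at this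
  have hden := floor_add_two_rpow_lt_exp_mul_Gamma (by linarith : 0 ≤ ρ)
  have hi : (0 : ℝ) < ((⌊ρ⌋₊ : ℝ) + 2) ^ ρ := by positivity
  rw [div_rpow hn0.le (by positivity), div_lt_iff₀ (by positivity)]
  calc Gamma ((n : ℝ) + 1) ≤ (n : ℝ) ^ ρ * Gamma ((n : ℝ) - ρ + 1) := hnum
    _ = (n : ℝ) ^ ρ / ((⌊ρ⌋₊ : ℝ) + 2) ^ ρ * ((⌊ρ⌋₊ : ℝ) + 2) ^ ρ * Gamma ((n : ℝ) - ρ + 1) := by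
      rw [div_mul_cancel₀ _ hi.ne']
    _ < (n : ℝ) ^ ρ / ((⌊ρ⌋₊ : ℝ) + 2) ^ ρ * (exp (ρ + 1) * Gamma ((⌊ρ⌋₊ : ℝ) + 2)) *
        Gamma ((n : ℝ) - ρ + 1) := by gcongr
    _ = _ := by ring

/-- For every non-integer real `ρ ≥ 1`, every integer `n ≥ 2ρ+1`, and `i = ⌊ρ⌋+2`:
`Γ(n+1)/(Γ(i) Γ(n-ρ+1)) < e^(ρ+1) (n/i)^ρ`. -/
theorem stmt_13 (ρ : ℝ) (h1 : 1 ≤ ρ) (hni : ¬∃ m : ℤ, (m : ℝ) = ρ)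
    (n : ℕ) (hn : 2 * ρ + 1 ≤ (n : ℝ)) :
    Real.Gamma ((n : ℝ) + 1) /
        (Real.Gamma ((⌊ρ⌋₊ : ℝ) + 2) * Real.Gamma ((n : ℝ) - ρ + 1)) <
      Real.exp (ρ + 1) * ((n : ℝ) / ((⌊ρ⌋₊ : ℝ) + 2)) ^ ρ :=
  stmt_13_general ρ h1 n hn
end

section
/- Let $X_1,\dots,X_n$ be independent identically distributed real-valued random variables with distribution function $F$ and order statistics $X_{1:n}\le\dots\le X_{n:n}$, let $k,\delta>0$ with $\rho=k/\delta>1$ non-integer, $n\ge 2\rho+1$, and $\mathbf{E}|X_1|^{\delta}<\infty$. Then for $i=\lfloor\rho\rfloor+1$, one has $\mathbf{E}|X_{i:n}|^k \le (\mathbf{E}|X_1|^{\delta})^{\rho}\,\dfrac{n^{\rho}}{\lfloor\rho\rfloor!}\Bigl(\dfrac{n}{\,n-2\lfloor\rho\rfloor\,}\Bigr)^{\lfloor\rho\rfloor+1-\rho}$. -/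
open MeasureTheory ProbabilityTheory Finset
open scoped ENNReal

/-!
Put `W l = |X l|^δ` and let `e j` be the `j`-th elementary symmetric sum of the `W l`. Since
`n ≥ 2m + 1`, at least `m + 1` of the `|X l|` dominate `|X_{m+1:n}|` (the ones above it if it is
nonnegative, the ones below it otherwise), so `|X_{m+1:n}|^{δ j} ≤ e j` for `j ≤ m + 1`.
Interpolating between `j = m` and `j = m + 1` gives
`|X_{m+1:n}|^k ≤ e m ^ (m + 1 - ρ) * e (m + 1) ^ (ρ - m)`, Hölder's inequality moves the
expectation inside the two factors, and independence gives `E (e j) = C(n, j) (E W)^j` with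
`C(n, j) ≤ n^j / m!` for `j ≤ m + 1`.
-/

theorem ENNReal.rpow_eq_pow_rpow_mul_pow_succ_rpow (x : ℝ≥0∞) {m : ℕ} {ρ : ℝ}
    (hm : (m : ℝ) ≤ ρ) (hm1 : ρ ≤ m + 1) :
    x ^ ρ = (x ^ m) ^ ((m : ℝ) + 1 - ρ) * (x ^ (m + 1)) ^ (ρ - m) := by
  rw [← ENNReal.rpow_natCast, ← ENNReal.rpow_natCast, ← ENNReal.rpow_mul, ← ENNReal.rpow_mul,
    ← ENNReal.rpow_add_of_nonneg _ _ (by nlinarith) (by push_cast; nlinarith)]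
  congr 1
  push_cast
  ring

theorem Real.rpow_eq_pow_rpow_mul_pow_succ_rpow {x : ℝ} (hx : 0 ≤ x) {m : ℕ} {ρ : ℝ}
    (hm : (m : ℝ) ≤ ρ) (hm1 : ρ ≤ m + 1) :
    x ^ ρ = (x ^ m) ^ ((m : ℝ) + 1 - ρ) * (x ^ (m + 1)) ^ (ρ - m) := by
  rw [← Real.rpow_natCast, ← Real.rpow_natCast, ← Real.rpow_mul hx, ← Real.rpow_mul hx,
    ← Real.rpow_add_of_nonneg hx (by nlinarith) (by push_cast; nlinarith)]
  congr 1
  push_cast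
  ring

theorem Finset.pow_le_esymm_map_val {ι : Type*} {s S : Finset ι} (hS : S ⊆ s) (w : ι → ℝ≥0∞)
    {u : ℝ≥0∞} (hu : ∀ l ∈ S, u ≤ w l) {j : ℕ} (hj : j ≤ #S) :
    u ^ j ≤ (s.val.map w).esymm j := by
  obtain ⟨T, hTS, rfl⟩ := exists_subset_card_eq hj
  rw [esymm_map_val, ← prod_const]
  calc ∏ _l ∈ T, u ≤ ∏ l ∈ T, w l := prod_le_prod' fun l hl => hu l (hTS hl)
    _ ≤ ∑ T' ∈ s.powersetCard #T, ∏ l ∈ T', w l :=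
      single_le_sum (f := fun T' => ∏ l ∈ T', w l) (fun _ _ => zero_le)
        (mem_powersetCard.mpr ⟨hTS.trans hS, rfl⟩)

theorem Finset.rpow_le_esymm_rpow_mul_esymm_rpow {ι : Type*} {s S : Finset ι} (hS : S ⊆ s)
    (w : ι → ℝ≥0∞) {u : ℝ≥0∞} (hu : ∀ l ∈ S, u ≤ w l) {m : ℕ} (hmS : m + 1 ≤ #S) {ρ : ℝ}
    (hm : (m : ℝ) ≤ ρ) (hm1 : ρ ≤ m + 1) :
    u ^ ρ ≤ ((s.val.map w).esymm m) ^ ((m : ℝ) + 1 - ρ) *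
      ((s.val.map w).esymm (m + 1)) ^ (ρ - m) := by
  rw [u.rpow_eq_pow_rpow_mul_pow_succ_rpow hm hm1]
  exact mul_le_mul'
    (ENNReal.rpow_le_rpow (pow_le_esymm_map_val hS w hu (by omega)) (by linarith))
    (ENNReal.rpow_le_rpow (pow_le_esymm_map_val hS w hu hmS) (by linarith))

theorem Fin.exists_card_eq_abs_le_abs_of_monotone {α : Type*} [AddCommGroup α] [LinearOrder α]
    [IsOrderedAddMonoid α] {n : ℕ} {y : Fin n → α} (hy : Monotone y) (i : Fin n)
    (hi : 2 * (i : ℕ) < n) :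
    ∃ S : Finset (Fin n), #S = i + 1 ∧ ∀ j ∈ S, |y i| ≤ |y j| := by
  rcases le_or_gt 0 (y i) with h0 | h0
  · obtain ⟨S, hS, hcard⟩ := exists_subset_card_eq (s := Ici i) (n := i + 1)
      (by rw [Fin.card_Ici]; omega)
    refine ⟨S, hcard, fun j hj => ?_⟩
    rw [abs_of_nonneg h0]
    exact (hy (mem_Ici.mp (hS hj))).trans (le_abs_self _)
  · refine ⟨Iic i, Fin.card_Iic i, fun j hj => ?_⟩
    rw [abs_of_neg h0]
    exact (neg_le_neg (hy (mem_Iic.mp hj))).trans (neg_le_abs _)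

theorem ofReal_abs_rpow_le_esymm_rpow_mul_esymm_rpow {n : ℕ} {x y : Fin n → ℝ}
    (hy : Monotone y) (hxy : ∃ σ : Equiv.Perm (Fin n), ∀ j, y j = x (σ j)) (i : Fin n)
    (hi : 2 * (i : ℕ) < n) {δ : ℝ} (hδ : 0 ≤ δ) {ρ : ℝ} (hρ : (i : ℝ) ≤ ρ) (hρ1 : ρ ≤ i + 1) :
    ENNReal.ofReal (|y i| ^ (δ * ρ)) ≤
      ((univ.val.map fun l => ENNReal.ofReal (|x l| ^ δ)).esymm i) ^ ((i : ℝ) + 1 - ρ) *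
      ((univ.val.map fun l => ENNReal.ofReal (|x l| ^ δ)).esymm (i + 1)) ^ (ρ - i) := by
  obtain ⟨σ, hσ⟩ := hxy
  obtain ⟨S, hcard, hS⟩ := Fin.exists_card_eq_abs_le_abs_of_monotone hy i hi
  have hu : ∀ l ∈ S.map σ.toEmbedding,
      ENNReal.ofReal (|y i| ^ δ) ≤ ENNReal.ofReal (|x l| ^ δ) := by
    intro l hl
    obtain ⟨j, hj, rfl⟩ := mem_map.mp hl
    rw [Equiv.coe_toEmbedding, ← hσ j]
    exact ENNReal.ofReal_le_ofReal (Real.rpow_le_rpow (abs_nonneg _) (hS j hj) hδ)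
  rw [Real.rpow_mul (abs_nonneg _), ← ENNReal.ofReal_rpow_of_nonneg (by positivity)
    (by linarith [(Nat.cast_nonneg i : (0 : ℝ) ≤ i)])]
  exact rpow_le_esymm_rpow_mul_esymm_rpow (subset_univ _) _ hu
    (by rw [card_map, hcard]) hρ hρ1

theorem Finset.measurable_esymm_map_val {Ω ι : Type*} [MeasurableSpace Ω]
    {W : ι → Ω → ℝ≥0∞} (hW : ∀ l, Measurable (W l)) (s : Finset ι) (j : ℕ) :
    Measurable fun ω => (s.val.map fun l => W l ω).esymm j := by
  simp_rw [esymm_map_val]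
  exact measurable_sum _ fun T _ => T.measurable_prod fun l _ => hW l

theorem ProbabilityTheory.iIndepFun.lintegral_esymm_map_val {Ω ι : Type*} [MeasurableSpace Ω]
    {μ : Measure Ω} {W : ι → Ω → ℝ≥0∞} (hW : iIndepFun W μ) (hmeas : ∀ l, Measurable (W l))
    {c : ℝ≥0∞} (hc : ∀ l, ∫⁻ ω, W l ω ∂μ = c) (s : Finset ι) (j : ℕ) :
    ∫⁻ ω, (s.val.map fun l => W l ω).esymm j ∂μ = (#s).choose j * c ^ j := by
  simp_rw [esymm_map_val]
  rw [lintegral_finsetSum _ fun T _ => T.measurable_prod fun l _ => hmeas l]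
  have hT : ∀ T ∈ s.powersetCard j, ∫⁻ ω, ∏ l ∈ T, W l ω ∂μ = c ^ j := fun T hT => by
    rw [lintegral_prod_eq_prod_lintegral_of_indepFun T W hW hmeas, prod_congr rfl fun l _ => hc l,
      prod_const, (mem_powersetCard.mp hT).2]
  rw [sum_congr rfl hT, sum_const, card_powersetCard, nsmul_eq_mul]

theorem ProbabilityTheory.iIndepFun.lintegral_esymm_rpow_mul_esymm_rpow_le {Ω ι : Type*}
    [MeasurableSpace Ω] {μ : Measure Ω} {W : ι → Ω → ℝ≥0∞} (hW : iIndepFun W μ)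
    (hmeas : ∀ l, Measurable (W l)) {c : ℝ≥0∞} (hc : ∀ l, ∫⁻ ω, W l ω ∂μ = c) (s : Finset ι)
    (m : ℕ) {ρ : ℝ} (hm : (m : ℝ) ≤ ρ) (hm1 : ρ ≤ m + 1) :
    ∫⁻ ω, ((s.val.map fun l => W l ω).esymm m) ^ ((m : ℝ) + 1 - ρ) *
        ((s.val.map fun l => W l ω).esymm (m + 1)) ^ (ρ - m) ∂μ ≤
      ((#s).choose m * c ^ m) ^ ((m : ℝ) + 1 - ρ) *
        ((#s).choose (m + 1) * c ^ (m + 1)) ^ (ρ - m) := by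
  rw [← hW.lintegral_esymm_map_val hmeas hc, ← hW.lintegral_esymm_map_val hmeas hc]
  exact ENNReal.lintegral_mul_norm_pow_le (s.measurable_esymm_map_val hmeas m).aemeasurable
    (s.measurable_esymm_map_val hmeas (m + 1)).aemeasurable (by linarith) (by linarith) (by ring)

theorem choose_mul_pow_rpow_mul_choose_mul_pow_rpow_le {n m : ℕ} (hn : 2 * m < n) {a : ℝ}
    (ha : 0 ≤ a) {ρ : ℝ} (hm : (m : ℝ) ≤ ρ) (hm1 : ρ ≤ m + 1) :
    ((n.choose m : ℝ) * a ^ m) ^ ((m : ℝ) + 1 - ρ) *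
        ((n.choose (m + 1) : ℝ) * a ^ (m + 1)) ^ (ρ - m) ≤
      a ^ ρ * ((n : ℝ) ^ ρ / (m.factorial : ℝ) *
        ((n : ℝ) / ((n : ℝ) - 2 * m)) ^ ((m : ℝ) + 1 - ρ)) := by
  set c : ℝ := (m.factorial : ℝ)⁻¹
  set b : ℝ := n * a
  have hb : 0 ≤ b := by positivity
  have hc : 0 < c := by positivity
  have h1 : (n.choose m : ℝ) * a ^ m ≤ c * b ^ m := by
    rw [mul_pow, ← mul_assoc, inv_mul_eq_div]
    gcongr
    exact Nat.choose_le_pow_div m n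
  have h2 : (n.choose (m + 1) : ℝ) * a ^ (m + 1) ≤ c * b ^ (m + 1) := by
    rw [mul_pow, ← mul_assoc, inv_mul_eq_div]
    gcongr
    refine (Nat.choose_le_pow_div (m + 1) n).trans ?_
    gcongr
    exact m.le_succ
  have h2m : (0 : ℝ) < n - 2 * m := by
    rw [sub_pos]
    exact_mod_cast hn
  calc _ ≤ (c * b ^ m) ^ ((m : ℝ) + 1 - ρ) * (c * b ^ (m + 1)) ^ (ρ - m) := by
        gcongr ?_ * ?_
        · exact Real.rpow_le_rpow (by positivity) h1 (by linarith)
        · exact Real.rpow_le_rpow (by positivity) h2 (by linarith)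
    _ = c * b ^ ρ := by
        have hcc : c ^ ((m : ℝ) + 1 - ρ) * c ^ (ρ - m) = c := by
          rw [← Real.rpow_add_of_nonneg hc.le (by linarith) (by linarith),
            show (m : ℝ) + 1 - ρ + (ρ - m) = 1 by ring, Real.rpow_one]
        rw [Real.mul_rpow hc.le (by positivity), Real.mul_rpow hc.le (by positivity),
          Real.rpow_eq_pow_rpow_mul_pow_succ_rpow hb hm hm1]
        linear_combination ((b ^ m) ^ ((m : ℝ) + 1 - ρ) * (b ^ (m + 1)) ^ (ρ - m)) * hcc
    _ = a ^ ρ * ((n : ℝ) ^ ρ / (m.factorial : ℝ)) := by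
        rw [Real.mul_rpow (Nat.cast_nonneg n) ha]
        ring
    _ ≤ _ := by
        have hq : 1 ≤ ((n : ℝ) / ((n : ℝ) - 2 * m)) ^ ((m : ℝ) + 1 - ρ) :=
          Real.one_le_rpow ((one_le_div h2m).mpr (by linarith)) (by linarith)
        exact mul_le_mul_of_nonneg_left (le_mul_of_one_le_right (by positivity) hq) (by positivity)

theorem stmt_14_general {Ω : Type*} [MeasurableSpace Ω] (μ : Measure Ω) [IsProbabilityMeasure μ]
    (n : ℕ) (hn : 0 < n) (X Y : Fin n → Ω → ℝ)
    (hmeas : ∀ j, Measurable (X j))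
    (hindep : iIndepFun X μ)
    (hident : ∀ j, μ.map (X j) = μ.map (X ⟨0, hn⟩))
    (hsort : ∀ ω, Monotone fun j => Y j ω)
    (hperm : ∀ ω, ∃ σ : Equiv.Perm (Fin n), ∀ j, Y j ω = X (σ j) ω)
    (k δ : ℝ) (hδ : 0 < δ)
    (m : ℕ) (hm1 : (m : ℝ) < k / δ) (hm2 : k / δ < (m : ℝ) + 1)
    (hnρ : 2 * (k / δ) + 1 ≤ (n : ℝ))
    (hmom : Integrable (fun ω => |X ⟨0, hn⟩ ω| ^ δ) μ)
    (i : Fin n) (hi : (i : ℕ) = m) :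
    ∫⁻ ω, ENNReal.ofReal (|Y i ω| ^ k) ∂μ ≤
      ENNReal.ofReal ((∫ ω, |X ⟨0, hn⟩ ω| ^ δ ∂μ) ^ (k / δ) *
        ((n : ℝ) ^ (k / δ) / (m.factorial : ℝ) *
          ((n : ℝ) / ((n : ℝ) - 2 * m)) ^ ((m : ℝ) + 1 - k / δ))) := by
  subst hi
  set ρ := k / δ
  set a := ∫ ω, |X ⟨0, hn⟩ ω| ^ δ ∂μ
  have ha : 0 ≤ a := integral_nonneg fun ω => by positivity
  have hi : 2 * (i : ℕ) < n := by exact_mod_cast (by push_cast; linarith : ((2 * i : ℕ) : ℝ) < n)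
  set g : ℝ → ℝ≥0∞ := fun x => ENNReal.ofReal (|x| ^ δ)
  have hg : Measurable g := (measurable_abs.pow_const δ).ennreal_ofReal
  have hmoment : ∀ l, ∫⁻ ω, g (X l ω) ∂μ = ENNReal.ofReal a := fun l => by
    rw [← lintegral_map hg (hmeas l), hident l, lintegral_map hg (hmeas _),
      ofReal_integral_eq_lintegral_ofReal hmom (.of_forall fun ω => by positivity)]
  have hpt : ∀ ω, ENNReal.ofReal (|Y i ω| ^ k) ≤
      ((univ.val.map fun l => g (X l ω)).esymm i) ^ ((i : ℝ) + 1 - ρ) *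
      ((univ.val.map fun l => g (X l ω)).esymm (i + 1)) ^ (ρ - i) := fun ω => by
    rw [← mul_div_cancel₀ k hδ.ne']
    exact ofReal_abs_rpow_le_esymm_rpow_mul_esymm_rpow (hsort ω) (hperm ω) i hi hδ.le
      hm1.le hm2.le
  calc ∫⁻ ω, ENNReal.ofReal (|Y i ω| ^ k) ∂μ
      ≤ _ := lintegral_mono hpt
    _ ≤ _ := (hindep.comp (fun _ => g) fun _ => hg).lintegral_esymm_rpow_mul_esymm_rpow_le
      (fun l => hg.comp (hmeas l)) hmoment univ i hm1.le hm2.le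
    _ = ENNReal.ofReal (((n.choose i : ℝ) * a ^ (i : ℕ)) ^ ((i : ℝ) + 1 - ρ) *
          ((n.choose (i + 1) : ℝ) * a ^ ((i : ℕ) + 1)) ^ (ρ - i)) := by
      rw [card_univ, Fintype.card_fin, ← ENNReal.ofReal_pow ha,
        ← ENNReal.ofReal_pow ha, ← ENNReal.ofReal_natCast, ← ENNReal.ofReal_natCast,
        ← ENNReal.ofReal_mul (by positivity), ← ENNReal.ofReal_mul (by positivity),
        ENNReal.ofReal_rpow_of_nonneg (by positivity) (by linarith),
        ENNReal.ofReal_rpow_of_nonneg (by positivity) (by linarith),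
        ← ENNReal.ofReal_mul (by positivity)]
    _ ≤ _ := ENNReal.ofReal_le_ofReal
      (choose_mul_pow_rpow_mul_choose_mul_pow_rpow_le hi ha hm1.le hm2.le)

/-- Bound for the `(⌊ρ⌋+1)`-th order statistic when `ρ = k/δ > 1` is non-integer with integer
part `m = ⌊ρ⌋` (so `m ≥ 1` and `m < ρ < m+1`): for i.i.d. real random variables
`X 0, …, X (n-1)` with order statistics `Y`, `n ≥ 2ρ+1`, `E|X_1|^δ < ∞`, and `i` the index with
1-based value `m+1`: `E|X_{i:n}|^k ≤ (E|X_1|^δ)^ρ (n^ρ/m!) (n/(n-2m))^(m+1-ρ)`. -/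
theorem stmt_14 {Ω : Type*} [MeasurableSpace Ω] (μ : Measure Ω) [IsProbabilityMeasure μ]
    (n : ℕ) (hn : 0 < n) (X Y : Fin n → Ω → ℝ)
    (hmeas : ∀ j, Measurable (X j))
    (hindep : iIndepFun X μ)
    (hident : ∀ j, μ.map (X j) = μ.map (X ⟨0, hn⟩))
    (hsort : ∀ ω, Monotone fun j => Y j ω)
    (hperm : ∀ ω, ∃ σ : Equiv.Perm (Fin n), ∀ j, Y j ω = X (σ j) ω)
    (k δ : ℝ) (hk : 0 < k) (hδ : 0 < δ)
    (m : ℕ) (hm : 1 ≤ m) (hm1 : (m : ℝ) < k / δ) (hm2 : k / δ < (m : ℝ) + 1)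
    (hnρ : 2 * (k / δ) + 1 ≤ (n : ℝ))
    (hmom : Integrable (fun ω => |X ⟨0, hn⟩ ω| ^ δ) μ)
    (i : Fin n) (hi : (i : ℕ) = m) :
    ∫⁻ ω, ENNReal.ofReal (|Y i ω| ^ k) ∂μ ≤
      ENNReal.ofReal ((∫ ω, |X ⟨0, hn⟩ ω| ^ δ ∂μ) ^ (k / δ) *
        ((n : ℝ) ^ (k / δ) / (m.factorial : ℝ) *
          ((n : ℝ) / ((n : ℝ) - 2 * m)) ^ ((m : ℝ) + 1 - k / δ))) :=
  stmt_14_general μ n hn X Y hmeas hindep hident hsort hperm k δ hδ m hm1 hm2 hnρ hmom i hi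
end

section
/- For every real $x>0$, the gamma function satisfies $\sqrt{2\pi}\,x^{x+1/2}e^{-x} < \Gamma(1+x) < \sqrt{2\pi}\,x^{x+1/2}e^{-x+1/(12x)}$. -/
open Real Filter Set Topology

noncomputable def dd (x : ℝ) : ℝ :=
  Real.log (Real.Gamma x) - (x - 1/2) * Real.log x + x - Real.log (Real.sqrt (2 * Real.pi))

noncomputable def gg (x : ℝ) : ℝ := (x + 1/2) * (Real.log (x+1) - Real.log x) - 1

lemma dd_eq {x : ℝ} (hx : 0 < x) : dd x = gg x + dd (x+1) := by
  have h1 : Real.Gamma (x+1) = x * Real.Gamma x := Real.Gamma_add_one hx.ne'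
  have h2 : Real.log (Real.Gamma (x+1)) = Real.log x + Real.log (Real.Gamma x) := by
    rw [h1, Real.log_mul hx.ne' (Real.Gamma_pos_of_pos hx).ne']
  simp only [dd, gg, h2]; ring


noncomputable def hh2 (t : ℝ) : ℝ := Real.log (1+t) - Real.log (1-t) - 2*t
noncomputable def hh3 (t : ℝ) : ℝ :=
  2*t + (2/3) * t^3/(1-t^2) - (Real.log (1+t) - Real.log (1-t))

lemma hh2_deriv {t : ℝ} (ht : t ∈ Set.Ioo (-1:ℝ) 1) :
    HasDerivAt hh2 (1/(1+t) + 1/(1-t) - 2) t := by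
  obtain ⟨h1, h2⟩ := ht
  have ha : (1:ℝ)+t ≠ 0 := by linarith
  have hb : (1:ℝ)-t ≠ 0 := by linarith
  have d1 : HasDerivAt (fun t : ℝ => Real.log (1+t)) (1/(1+t)) t := by
    simpa using (((hasDerivAt_id t).const_add 1).log ha)
  have d2 : HasDerivAt (fun t : ℝ => Real.log (1-t)) (-(1/(1-t))) t := by
    have : HasDerivAt (fun t : ℝ => (1:ℝ)-t) (-1) t := by
      simpa using ((hasDerivAt_id t).const_sub 1)
    simpa [neg_div] using this.log hb
  have d3 : HasDerivAt (fun t : ℝ => 2*t) 2 t := by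
    simpa using (hasDerivAt_id t).const_mul 2
  have := (d1.sub d2).sub d3
  refine HasDerivAt.congr_deriv this ?_
  ring

lemma hh2_pos {t : ℝ} (ht : t ∈ Set.Ioo (0:ℝ) 1) : 0 < hh2 t := by
  have key : StrictMonoOn hh2 (Set.Ico (0:ℝ) 1) := by
    apply strictMonoOn_of_deriv_pos (convex_Ico 0 1)
    · intro u hu
      have : u ∈ Set.Ioo (-1:ℝ) 1 := ⟨by linarith [hu.1], hu.2⟩
      exact (hh2_deriv this).continuousAt.continuousWithinAt
    · intro u hu
      rw [interior_Ico] at hu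
      have hu' : u ∈ Set.Ioo (-1:ℝ) 1 := ⟨by linarith [hu.1], hu.2⟩
      rw [(hh2_deriv hu').deriv]
      have h1 : (0:ℝ) < 1+u := by linarith [hu.1]
      have h2 : (0:ℝ) < 1-u := by linarith [hu.2]
      have e : 1/(1+u) + 1/(1-u) - 2 = 2*u^2 / ((1+u)*(1-u)) := by
        field_simp; ring
      rw [e]
      exact div_pos (by nlinarith [hu.1]) (by nlinarith [hu.1, hu.2])
  have h0 : hh2 0 = 0 := by simp [hh2]
  have := key (Set.mem_Ico.2 ⟨le_refl 0, one_pos⟩) (Set.mem_Ico.2 ⟨ht.1.le, ht.2⟩) ht.1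
  linarith [this, h0.symm ▸ this]

lemma hh3_deriv {t : ℝ} (ht : t ∈ Set.Ioo (-1:ℝ) 1) :
    HasDerivAt hh3 (((2/3*(3*t^2))*(1-t^2) - 2/3*t^3*(-(2*t)))/((1-t^2)^2)
      + 2 - (1/(1+t) - -(1/(1-t)))) t := by
  obtain ⟨h1, h2⟩ := ht
  have ha : (1:ℝ)+t ≠ 0 := by linarith
  have hb : (1:ℝ)-t ≠ 0 := by linarith
  have hc : (1:ℝ)-t^2 ≠ 0 := by nlinarith
  have d1 : HasDerivAt (fun t : ℝ => Real.log (1+t)) (1/(1+t)) t := by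
    simpa using (((hasDerivAt_id t).const_add 1).log ha)
  have d2 : HasDerivAt (fun t : ℝ => Real.log (1-t)) (-(1/(1-t))) t := by
    have : HasDerivAt (fun t : ℝ => (1:ℝ)-t) (-1) t := by
      simpa using ((hasDerivAt_id t).const_sub 1)
    simpa [neg_div] using this.log hb
  have d3 : HasDerivAt (fun t : ℝ => 2*t) 2 t := by
    simpa using (hasDerivAt_id t).const_mul 2
  have d4 : HasDerivAt (fun t : ℝ => t^3) (3*t^2) t := by
    simpa using hasDerivAt_pow 3 t
  have d5 : HasDerivAt (fun t : ℝ => 1-t^2) (-(2*t)) t := by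
    have := hasDerivAt_pow 2 t
    simpa using ((hasDerivAt_pow 2 t).const_sub 1)
  have d6 : HasDerivAt (fun t : ℝ => 2/3*t^3/(1-t^2))
      (((2/3*(3*t^2))*(1-t^2) - 2/3*t^3*(-(2*t)))/((1-t^2)^2)) t :=
    (d4.const_mul (2/3)).div d5 hc
  have h := (d3.add d6).sub (d1.sub d2)
  have e2 : 2 + (((2/3*(3*t^2))*(1-t^2) - 2/3*t^3*(-(2*t)))/((1-t^2)^2))
      - (1/(1+t) - -(1/(1-t)))
      = (((2/3*(3*t^2))*(1-t^2) - 2/3*t^3*(-(2*t)))/((1-t^2)^2))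
      + 2 - (1/(1+t) - -(1/(1-t))) := by ring
  rw [e2] at h
  exact h

lemma hh3_pos {t : ℝ} (ht : t ∈ Set.Ioo (0:ℝ) 1) : 0 < hh3 t := by
  have key : StrictMonoOn hh3 (Set.Ico (0:ℝ) 1) := by
    apply strictMonoOn_of_deriv_pos (convex_Ico 0 1)
    · intro u hu
      have : u ∈ Set.Ioo (-1:ℝ) 1 := ⟨by linarith [hu.1], hu.2⟩
      exact (hh3_deriv this).continuousAt.continuousWithinAt
    · intro u hu
      rw [interior_Ico] at hu
      have hu' : u ∈ Set.Ioo (-1:ℝ) 1 := ⟨by linarith [hu.1], hu.2⟩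
      rw [(hh3_deriv hu').deriv]
      have h1 : (0:ℝ) < 1+u := by linarith [hu.1]
      have h2 : (0:ℝ) < 1-u := by linarith [hu.2]
      have hc : (0:ℝ) < 1-u^2 := by nlinarith
      have e : (((2/3*(3*u^2))*(1-u^2) - 2/3*u^3*(-(2*u)))/((1-u^2)^2))
          + 2 - (1/(1+u) - -(1/(1-u))) = (4/3)*u^4 / (1-u^2)^2 := by
        field_simp
        ring
      rw [e]
      exact div_pos (by nlinarith [pow_pos hu.1 4]) (by positivity)
  have h0 : hh3 0 = 0 := by simp [hh3]
  have := key (Set.mem_Ico.2 ⟨le_refl 0, one_pos⟩) (Set.mem_Ico.2 ⟨ht.1.le, ht.2⟩) ht.1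
  linarith [this, h0.symm ▸ this]

lemma logdiff_sub {x : ℝ} (hx : 0 < x) :
    Real.log (1 + 1/(2*x+1)) - Real.log (1 - 1/(2*x+1))
      = Real.log (x+1) - Real.log x := by
  have h1 : (0:ℝ) < 2*x+1 := by linarith
  have e1 : 1 + 1/(2*x+1) = (2*(x+1))/(2*x+1) := by field_simp; ring
  have e2 : 1 - 1/(2*x+1) = (2*x)/(2*x+1) := by field_simp; ring
  rw [e1, e2, Real.log_div (by positivity) h1.ne', Real.log_div (by positivity) h1.ne',
    Real.log_mul two_ne_zero (by positivity), Real.log_mul two_ne_zero hx.ne']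
  ring

lemma t_mem {x : ℝ} (hx : 0 < x) : 1/(2*x+1) ∈ Set.Ioo (0:ℝ) 1 := by
  constructor
  · positivity
  · rw [div_lt_one (by linarith)]; linarith

lemma gg_pos {x : ℝ} (hx : 0 < x) : 0 < gg x := by
  have h := hh2_pos (t_mem hx)
  rw [hh2, logdiff_sub hx] at h
  have h1 : (0:ℝ) < 2*x+1 := by linarith
  have e : 2*(1/(2*x+1)) = 1/(x+1/2) := by field_simp
  rw [e] at h
  have h2 : 1/(x+1/2) < Real.log (x+1) - Real.log x := by linarith
  have h3 : (0:ℝ) < x + 1/2 := by linarith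
  rw [gg]
  have h4 := mul_lt_mul_of_pos_left h2 h3
  have h5 : (x+1/2) * (1/(x+1/2)) = 1 := by field_simp
  linarith

lemma gg_lt {x : ℝ} (hx : 0 < x) : gg x < 1/(12*x) - 1/(12*(x+1)) := by
  have h := hh3_pos (t_mem hx)
  rw [hh3, logdiff_sub hx] at h
  have h1 : (0:ℝ) < 2*x+1 := by linarith
  have hx1 : (0:ℝ) < x+1 := by linarith
  have e : 2*(1/(2*x+1)) + (2/3)*(1/(2*x+1))^3/(1-(1/(2*x+1))^2)
      = 1/(x+1/2) + 1/(6*x*(x+1)*(2*x+1)) := by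
    have e0 : (1:ℝ) - (1/(2*x+1))^2 = (4*x*(x+1))/((2*x+1)^2) := by
      field_simp; ring
    rw [e0, div_div_eq_mul_div]
    field_simp
    ring
  rw [e] at h
  have key : Real.log (x+1) - Real.log x < 1/(x+1/2) + 1/(6*x*(x+1)*(2*x+1)) := by linarith
  rw [gg]
  have h3 : (0:ℝ) < x + 1/2 := by linarith
  have goal2 : (x+1/2) * (1/(x+1/2) + 1/(6*x*(x+1)*(2*x+1))) = 1 + (1/(12*x) - 1/(12*(x+1))) := by
    field_simp
    ring
  nlinarith [mul_lt_mul_of_pos_left key h3]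

lemma dd_sub {x : ℝ} (hx : 0 < x) (N : ℕ) :
    0 ≤ dd x - dd (x+N) ∧ dd x - dd (x+N) ≤ 1/(12*x) - 1/(12*(x+N)) := by
  induction N with
  | zero => simp
  | succ n ih =>
    have hxn : 0 < x + n := by positivity
    have heq : dd (x+n) = gg (x+n) + dd (x+(n+1):ℝ) := by
      have := dd_eq hxn
      rw [this]; push_cast; ring_nf
    have h1 := gg_pos hxn
    have h2 := gg_lt hxn
    have hc : ((n+1 : ℕ) : ℝ) = (n : ℝ) + 1 := by push_cast; ring
    rw [hc]
    constructor
    · nlinarith [ih.1]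
    · have : x + ((n:ℝ)+1) = (x + n) + 1 := by ring
      rw [this] at heq ⊢
      nlinarith [ih.2]

lemma dd_nat_tendsto : Tendsto (fun m : ℕ => dd (↑m + 1)) atTop (𝓝 0) := by
  have key : ∀ m : ℕ, 1 ≤ m → dd (↑m + 1)
      = Real.log (Stirling.stirlingSeq m) - Real.log (Real.sqrt Real.pi) - gg m := by
    intro m hm
    have hm0 : (0:ℝ) < m := by exact_mod_cast hm
    have h1 : Real.Gamma (↑m + 1) = (Nat.factorial m : ℝ) := Real.Gamma_nat_eq_factorial m
    have h2 := Stirling.log_stirlingSeq_formula m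
    have h3 : Real.log ((m:ℝ) / Real.exp 1) = Real.log m - 1 := by
      rw [Real.log_div hm0.ne' (Real.exp_ne_zero 1), Real.log_exp]
    have h4 : Real.log (2 * (m:ℝ)) = Real.log 2 + Real.log m :=
      Real.log_mul two_ne_zero hm0.ne'
    have h5 : Real.log (Real.sqrt (2 * Real.pi)) = (Real.log 2 + Real.log Real.pi) / 2 := by
      rw [Real.log_sqrt (by positivity), Real.log_mul two_ne_zero Real.pi_ne_zero]
    have h6 : Real.log (Real.sqrt Real.pi) = Real.log Real.pi / 2 :=
      Real.log_sqrt Real.pi_pos.le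
    rw [dd, gg, h1, h5, h6, h2, h3, h4]
    ring
  have hg : Tendsto (fun m : ℕ => gg m) atTop (𝓝 0) := by
    have hup : Tendsto (fun m : ℕ => 1/(12*(m:ℝ))) atTop (𝓝 0) := by
      have h0 : Tendsto (fun m : ℕ => (12*(m:ℝ))) atTop atTop :=
        (tendsto_natCast_atTop_atTop).const_mul_atTop (by norm_num)
      exact (tendsto_inv_atTop_zero.comp h0).congr (fun m => (one_div _).symm)
    apply tendsto_of_tendsto_of_tendsto_of_le_of_le' tendsto_const_nhds hup
    · filter_upwards [eventually_ge_atTop 1] with m hm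
      have hm0 : (0:ℝ) < m := by exact_mod_cast hm
      exact (gg_pos hm0).le
    · filter_upwards [eventually_ge_atTop 1] with m hm
      have hm0 : (0:ℝ) < m := by exact_mod_cast hm
      have h2 := gg_lt hm0
      have : (0:ℝ) < 1/(12*((m:ℝ)+1)) := by positivity
      linarith
  have hs : Tendsto (fun m : ℕ => Real.log (Stirling.stirlingSeq m)) atTop
      (𝓝 (Real.log (Real.sqrt Real.pi))) :=
    ((Real.continuousAt_log (Real.sqrt_pos.2 Real.pi_pos).ne').tendsto).comp
      Stirling.tendsto_stirlingSeq_sqrt_pi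
  have hcomb := (hs.sub (tendsto_const_nhds
      (x := Real.log (Real.sqrt Real.pi)))).sub hg
  rw [sub_self, sub_zero] at hcomb
  apply hcomb.congr'
  filter_upwards [eventually_ge_atTop 1] with m hm
  exact (key m hm).symm

lemma sandwich {x : ℝ} (hx : 0 < x) (hx1 : x ≤ 1) {n : ℕ} (hn : 1 ≤ n) :
    (↑n+1/2) * (Real.log (↑n+1) - Real.log (x+↑n)) + (x-1) ≤ dd (x+↑n) - dd (↑n+1) ∧
    dd (x+↑n) - dd (↑n+1) ≤ (↑n+1/2) * (Real.log (↑n+1) - Real.log (x+↑n)) + (x-1)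
      + (1-x) * (Real.log (x+↑n) - Real.log ↑n) := by
  have hn0 : (0:ℝ) < n := by exact_mod_cast hn
  have hy : (0:ℝ) < x + n := by linarith
  have hy1 : (0:ℝ) < (n:ℝ) + 1 := by linarith
  have cv := Real.convexOn_log_Gamma
  -- log Γ(n) = log Γ(n+1) - log n
  have hΓn : Real.log (Real.Gamma ((n:ℝ)))
      = Real.log (Real.Gamma ((n:ℝ)+1)) - Real.log n := by
    rw [Real.Gamma_add_one hn0.ne',
      Real.log_mul hn0.ne' (Real.Gamma_pos_of_pos hn0).ne']
    ring
  -- log Γ(y+1) = log y + log Γ(y)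
  have hΓy : Real.log (Real.Gamma ((x+↑n)+1))
      = Real.log (x+↑n) + Real.log (Real.Gamma (x+↑n)) := by
    rw [Real.Gamma_add_one hy.ne',
      Real.log_mul hy.ne' (Real.Gamma_pos_of_pos hy).ne']
  -- upper bound by convexity
  have hup : Real.log (Real.Gamma (x+↑n))
      ≤ Real.log (Real.Gamma ((n:ℝ)+1)) - (1-x) * Real.log n := by
    have h := cv.2 (Set.mem_Ioi.2 hn0) (Set.mem_Ioi.2 hy1)
      (by linarith : (0:ℝ) ≤ 1-x) (by linarith : (0:ℝ) ≤ x) (by ring)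
    have he : (1-x) • ((n:ℝ)) + x • ((n:ℝ)+1) = x + n := by
      simp only [smul_eq_mul]; ring
    rw [he] at h
    simp only [Function.comp_apply, smul_eq_mul] at h
    rw [hΓn] at h
    nlinarith [h]
  -- lower bound by convexity
  have hlow : Real.log (Real.Gamma ((n:ℝ)+1))
      ≤ Real.log (Real.Gamma (x+↑n)) + (1-x) * Real.log (x+↑n) := by
    have h := cv.2 (Set.mem_Ioi.2 hy) (Set.mem_Ioi.2 (by linarith : (0:ℝ) < (x+↑n)+1))
      (by linarith : (0:ℝ) ≤ x) (by linarith : (0:ℝ) ≤ 1-x) (by ring)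
    have he : x • (x+(n:ℝ)) + (1-x) • ((x+(n:ℝ))+1) = (n:ℝ)+1 := by
      simp only [smul_eq_mul]; ring
    rw [he] at h
    simp only [Function.comp_apply, smul_eq_mul] at h
    rw [hΓy] at h
    nlinarith [h]
  constructor
  · have key : dd (x+↑n) - dd (↑n+1)
        - ((↑n+1/2) * (Real.log (↑n+1) - Real.log (x+↑n)) + (x-1))
        = Real.log (Real.Gamma (x+↑n)) - Real.log (Real.Gamma ((n:ℝ)+1))
          + (1-x) * Real.log (x+↑n) := by
      simp only [dd]; ring
    linarith [key, hlow]
  · have key : dd (x+↑n) - dd (↑n+1)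
        - ((↑n+1/2) * (Real.log (↑n+1) - Real.log (x+↑n)) + (x-1)
           + (1-x) * (Real.log (x+↑n) - Real.log ↑n))
        = Real.log (Real.Gamma (x+↑n)) - Real.log (Real.Gamma ((n:ℝ)+1))
          + (1-x) * Real.log ↑n := by
      simp only [dd]; ring
    linarith [key, hup]

lemma tendsto_lower {x : ℝ} (hx : 0 < x) (hx1 : x ≤ 1) :
    Tendsto (fun n : ℕ => (↑n+1/2) * (Real.log (↑n+1) - Real.log (x+↑n)) + (x-1))
      atTop (𝓝 0) := by
  have hu : Tendsto (fun n : ℕ => x + (n:ℝ)) atTop atTop :=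
    tendsto_atTop_add_const_left _ _ tendsto_natCast_atTop_atTop
  have hL : Tendsto (fun n : ℕ => Real.log (1 + (1-x)/(x+↑n))) atTop (𝓝 0) := by
    have hv : Tendsto (fun n : ℕ => (1-x)/(x+↑n)) atTop (𝓝 0) :=
      tendsto_const_nhds.div_atTop hu
    have h1 : Tendsto (fun n : ℕ => 1 + (1-x)/(x+↑n)) atTop (𝓝 1) := by
      simpa using tendsto_const_nhds.add hv
    have := ((Real.continuousAt_log one_ne_zero).tendsto).comp h1
    simpa [Function.comp_def] using this
  have hT : Tendsto (fun n : ℕ => (x+↑n) * Real.log (1 + (1-x)/(x+↑n))) atTop (𝓝 (1-x)) :=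
    (Real.tendsto_mul_log_one_add_div_atTop (1-x)).comp hu
  have hcomb : Tendsto (fun n : ℕ =>
      (x+↑n) * Real.log (1 + (1-x)/(x+↑n)) + (1/2-x) * Real.log (1 + (1-x)/(x+↑n)) + (x-1))
      atTop (𝓝 0) := by
    have := (hT.add ((hL.const_mul (1/2-x)))).add
      (tendsto_const_nhds (x := x-1))
    simpa using this
  apply hcomb.congr'
  filter_upwards [eventually_ge_atTop 1] with n hn
  have hn0 : (0:ℝ) < n := by exact_mod_cast hn
  have hy : (0:ℝ) < x + n := by linarith
  have he : 1 + (1-x)/(x+↑n) = ((n:ℝ)+1)/(x+↑n) := by field_simp; ring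
  have hlog : Real.log (1 + (1-x)/(x+↑n)) = Real.log (↑n+1) - Real.log (x+↑n) := by
    rw [he, Real.log_div (by linarith) hy.ne']
  rw [hlog]; ring

lemma tendsto_extra {x : ℝ} (hx : 0 < x) :
    Tendsto (fun n : ℕ => (1-x) * (Real.log (x+↑n) - Real.log ↑n)) atTop (𝓝 0) := by
  have hu : Tendsto (fun n : ℕ => (n:ℝ)) atTop atTop := tendsto_natCast_atTop_atTop
  have hv : Tendsto (fun n : ℕ => x/(n:ℝ)) atTop (𝓝 0) := tendsto_const_nhds.div_atTop hu
  have h1 : Tendsto (fun n : ℕ => 1 + x/(n:ℝ)) atTop (𝓝 1) := by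
    simpa using tendsto_const_nhds.add hv
  have hL : Tendsto (fun n : ℕ => Real.log (1 + x/(n:ℝ))) atTop (𝓝 0) := by
    have := ((Real.continuousAt_log one_ne_zero).tendsto).comp h1
    simpa [Function.comp_def] using this
  have := hL.const_mul (1-x)
  rw [mul_zero] at this
  apply this.congr'
  filter_upwards [eventually_ge_atTop 1] with n hn
  have hn0 : (0:ℝ) < n := by exact_mod_cast hn
  have he : 1 + x/(n:ℝ) = (x+↑n)/(n:ℝ) := by field_simp; ring
  rw [he, Real.log_div (by linarith) hn0.ne']

lemma dd_tendsto_aux {x : ℝ} (hx : 0 < x) (hx1 : x ≤ 1) :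
    Tendsto (fun n : ℕ => dd (x + ↑n)) atTop (𝓝 0) := by
  have hdiff : Tendsto (fun n : ℕ => dd (x+↑n) - dd (↑n+1)) atTop (𝓝 0) := by
    have hupper := (tendsto_lower hx hx1).add (tendsto_extra hx)
    rw [add_zero] at hupper
    apply tendsto_of_tendsto_of_tendsto_of_le_of_le' (tendsto_lower hx hx1) hupper
    · filter_upwards [eventually_ge_atTop 1] with n hn
      exact (sandwich hx hx1 hn).1
    · filter_upwards [eventually_ge_atTop 1] with n hn
      exact (sandwich hx hx1 hn).2
  have := hdiff.add dd_nat_tendsto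
  simpa using this

lemma dd_tendsto {x : ℝ} (hx : 0 < x) :
    Tendsto (fun n : ℕ => dd (x + ↑n)) atTop (𝓝 0) := by
  set k : ℕ := ⌈x⌉₊ - 1 with hk
  have hk1 : 1 ≤ ⌈x⌉₊ := Nat.one_le_ceil_iff.2 hx
  have hkc : ((k:ℝ)) = (⌈x⌉₊ : ℝ) - 1 := by
    rw [hk, Nat.cast_sub hk1]; norm_num
  set y : ℝ := x - k with hy
  have hy0 : 0 < y := by
    have := Nat.ceil_lt_add_one hx.le
    rw [hy, hkc]; linarith
  have hy1 : y ≤ 1 := by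
    have := Nat.le_ceil x
    rw [hy, hkc]; linarith
  have haux := (dd_tendsto_aux hy0 hy1).comp (tendsto_add_atTop_nat k)
  apply haux.congr
  intro n
  simp only [Function.comp_apply]
  congr 1
  push_cast
  rw [hy, hkc]
  ring

lemma dd_le {x : ℝ} (hx : 0 < x) : 0 ≤ dd x ∧ dd x ≤ 1/(12*x) := by
  constructor
  · exact le_of_tendsto (dd_tendsto hx)
      (Filter.Eventually.of_forall fun N => by linarith [(dd_sub hx N).1])
  · have h : dd x - 1/(12*x) ≤ 0 := ge_of_tendsto (dd_tendsto hx)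
      (Filter.Eventually.of_forall fun N => by
        have hp : (0:ℝ) < 1/(12*(x+(N:ℝ))) := by positivity
        linarith [(dd_sub hx N).2])
    linarith

lemma dd_bounds {x : ℝ} (hx : 0 < x) : 0 < dd x ∧ dd x < 1/(12*x) := by
  have hx1 : (0:ℝ) < x + 1 := by linarith
  have heq := dd_eq hx
  have h1 := gg_pos hx
  have h2 := gg_lt hx
  have h3 := dd_le hx1
  exact ⟨by linarith [h3.1], by linarith [h3.2]⟩

/-- Stirling-type two-sided bound for the Gamma function: for every real `x > 0`,
`√(2π) x^(x+1/2) e^(-x) < Γ(1+x) < √(2π) x^(x+1/2) e^(-x+1/(12x))`. -/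
theorem stmt_16 (x : ℝ) (hx : 0 < x) :
    Real.sqrt (2 * Real.pi) * x ^ (x + 1/2) * Real.exp (-x) < Real.Gamma (1 + x) ∧
    Real.Gamma (1 + x) <
      Real.sqrt (2 * Real.pi) * x ^ (x + 1/2) * Real.exp (-x + 1/(12*x)) := by
  have hs : (0:ℝ) < Real.sqrt (2 * Real.pi) := Real.sqrt_pos.2 (by positivity)
  have hΓ : Real.Gamma (1 + x)
      = Real.sqrt (2 * Real.pi) * x ^ (x + 1/2) * Real.exp (-x + dd x) := by
    rw [add_comm, Real.Gamma_add_one hx.ne']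
    have hΓpos := Real.Gamma_pos_of_pos hx
    have h1 : Real.Gamma x = Real.exp (dd x + (x - 1/2) * Real.log x - x
        + Real.log (Real.sqrt (2 * Real.pi))) := by
      rw [show dd x + (x - 1/2) * Real.log x - x + Real.log (Real.sqrt (2 * Real.pi))
          = Real.log (Real.Gamma x) from by rw [dd]; ring, Real.exp_log hΓpos]
    rw [h1, Real.rpow_def_of_pos hx]
    set A := dd x + (x - 1/2) * Real.log x - x + Real.log (Real.sqrt (2 * Real.pi)) with hA
    calc x * Real.exp A = Real.exp (Real.log x + A) := by
          nth_rewrite 1 [← Real.exp_log hx]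
          rw [← Real.exp_add]
      _ = Real.exp (Real.log (Real.sqrt (2 * Real.pi))
            + (Real.log x * (x + 1/2) + (-x + dd x))) := by
          rw [hA]; congr 1; ring
      _ = Real.exp (Real.log (Real.sqrt (2 * Real.pi)))
            * Real.exp (Real.log x * (x + 1/2) + (-x + dd x)) := Real.exp_add _ _
      _ = Real.exp (Real.log (Real.sqrt (2 * Real.pi)))
            * (Real.exp (Real.log x * (x + 1/2)) * Real.exp (-x + dd x)) := by
          rw [Real.exp_add]
      _ = Real.sqrt (2 * Real.pi) * Real.exp (Real.log x * (x + 1/2))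
            * Real.exp (-x + dd x) := by rw [Real.exp_log hs, ← mul_assoc]
  have hpos : (0:ℝ) < Real.sqrt (2 * Real.pi) * x ^ (x + 1/2) := by positivity
  obtain ⟨h1, h2⟩ := dd_bounds hx
  constructor
  · rw [hΓ, mul_assoc, mul_assoc]
    apply mul_lt_mul_of_pos_left _ hs
    apply mul_lt_mul_of_pos_left _ (Real.rpow_pos_of_pos hx _)
    exact Real.exp_lt_exp.2 (by linarith)
  · rw [hΓ, mul_assoc, mul_assoc]
    apply mul_lt_mul_of_pos_left _ hs
    apply mul_lt_mul_of_pos_left _ (Real.rpow_pos_of_pos hx _)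
    exact Real.exp_lt_exp.2 (by linarith)
end
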